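/- Let φ : G → Homeo(X) be an expansive continuous action with expansive constant c > 0 of a finitely generated group G, with finite symmetric generating set S, on a compact metric space (X,d). Let l be a positive integer such that for any x, y ∈ X with d(x,y) ≥ c/2 one has max_{g∈G, |g|≤l} d(gx, gy) ≥ c, and let α > 1 be a real number with α^l < 2. Define n(x,y) = min{n ∈ ℕ : ∃ g ∈ G, |g| ≤ n, d(gx, gy) ≥ c} for x ≠ y, n(x,y) = ∞ otherwise, and ρ(x,y) = α^{-n(x,y)} (with α^{-∞} = 0). Then for all x, y, z ∈ X, ρ(x,z) ≤ 2·max{ρ(x,y), ρ(y,z)}. -/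
import Mathlib


open Pointwise Filter Metric Set Topology TopologicalSpace

/-- The group of self-homeomorphisms of `X`, with `(f * g) x = f (g x)`. -/
instance homeoGroup {X : Type*} [TopologicalSpace X] : Group (X ≃ₜ X) where
  mul f g := g.trans f
  one := Homeomorph.refl X
  inv := Homeomorph.symm
  mul_assoc _ _ _ := rfl
  one_mul _ := Homeomorph.ext fun _ => rfl
  mul_one _ := Homeomorph.ext fun _ => rfl
  inv_mul_cancel f := Homeomorph.ext f.symm_apply_apply

/-- The word length of `g` with respect to the (symmetric) generating set `S`:
the least `n` such that `g` is a product of `n` elements of `S`. -/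
noncomputable def wordLength {G : Type*} [Group G] (S : Set G) (g : G) : ℕ :=
  sInf {n : ℕ | g ∈ S ^ n}

/-- The growth function `β(G,S;k) = #{g ∈ G : |g| ≤ k}`. -/
noncomputable def growthFn {G : Type*} [Group G] (S : Set G) (k : ℕ) : ℕ :=
  Set.ncard {g : G | wordLength S g ≤ k}

/-- `G` has subexponential growth w.r.t. `S`: `lim_k β(G,S;k)^{1/k} ≤ 1`. -/
def SubexpGrowth {G : Type*} [Group G] (S : Set G) : Prop :=
  Filter.limsup (fun k : ℕ => (growthFn S k : ℝ) ^ (1 / (k : ℝ))) Filter.atTop ≤ 1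

/-- A continuum (here: a compact connected metric space, via instances) is Suslinian if
every family of pairwise disjoint nondegenerate subcontinua is countable. -/
def Suslinian (X : Type*) [MetricSpace X] : Prop :=
  ∀ 𝒜 : Set (Set X), (∀ A ∈ 𝒜, IsCompact A ∧ IsConnected A ∧ A.Nontrivial) →
    𝒜.Pairwise Disjoint → 𝒜.Countable

/-- `n(x,y)`: the least `n` such that `d(gx,gy) ≥ c` for some `g` with `|g| ≤ n`
(`∞` if there is no such `n`, in particular when `x = y`). -/
noncomputable def nIdx {G X : Type*} [Group G] [MetricSpace X] (S : Set G)
    (φ : G →* (X ≃ₜ X)) (c : ℝ) (x y : X) : ℕ∞ :=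
  sInf ((↑) '' {n : ℕ | ∃ g : G, wordLength S g ≤ n ∧ c ≤ dist (φ g x) (φ g y)})

/-- `ρ(x,y) = α^{-n(x,y)}`, with `α^{-∞} = 0`. -/
noncomputable def rho {G X : Type*} [Group G] [MetricSpace X] (S : Set G)
    (φ : G →* (X ≃ₜ X)) (c α : ℝ) (x y : X) : ℝ :=
  if nIdx S φ c x y = ⊤ then 0 else α ^ (-((nIdx S φ c x y).toNat : ℤ))

lemma exists_pow_mem {G : Type*} [Group G] {S : Set G} (hSsym : S⁻¹ = S)
    (hSgen : Subgroup.closure S = ⊤) (g : G) : ∃ n : ℕ, g ∈ S ^ n := by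
  have hg : g ∈ Subgroup.closure S := hSgen ▸ Subgroup.mem_top g
  induction hg using Subgroup.closure_induction with
  | mem x hx => exact ⟨1, by simpa using hx⟩
  | one => exact ⟨0, by simp⟩
  | mul a b _ _ ha hb =>
    obtain ⟨m, hm⟩ := ha; obtain ⟨n, hn⟩ := hb
    exact ⟨m + n, by rw [pow_add]; exact Set.mul_mem_mul hm hn⟩
  | inv a _ ha =>
    obtain ⟨m, hm⟩ := ha
    refine ⟨m, ?_⟩
    have : a⁻¹ ∈ (S ^ m)⁻¹ := by simpa using hm
    rwa [← inv_pow, hSsym] at this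

lemma mem_pow_wordLength {G : Type*} [Group G] {S : Set G} (hSsym : S⁻¹ = S)
    (hSgen : Subgroup.closure S = ⊤) (g : G) : g ∈ S ^ wordLength S g :=
  Nat.sInf_mem (exists_pow_mem hSsym hSgen g)

lemma wordLength_mul_le {G : Type*} [Group G] {S : Set G} (hSsym : S⁻¹ = S)
    (hSgen : Subgroup.closure S = ⊤) (g h : G) :
    wordLength S (g * h) ≤ wordLength S g + wordLength S h := by
  apply Nat.sInf_le
  rw [Set.mem_setOf_eq, pow_add]
  exact Set.mul_mem_mul (mem_pow_wordLength hSsym hSgen g)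
    (mem_pow_wordLength hSsym hSgen h)

lemma rho_nonneg {G X : Type*} [Group G] [MetricSpace X] (S : Set G)
    (φ : G →* (X ≃ₜ X)) (c α : ℝ) (hα : 0 < α) (x y : X) :
    0 ≤ rho S φ c α x y := by
  unfold rho
  split
  · exact le_rfl
  · positivity

/-- The function `ρ(x,y) = α^{-n(x,y)}` satisfies the weak (quasi-)triangle inequality
`ρ(x,z) ≤ 2 max{ρ(x,y), ρ(y,z)}`. -/
theorem rho_quasi_triangle
    {G : Type*} [Group G] (S : Set G) (hSfin : S.Finite) (hSsym : S⁻¹ = S)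
    (hSgen : Subgroup.closure S = ⊤)
    {X : Type*} [MetricSpace X] [CompactSpace X] (φ : G →* (X ≃ₜ X))
    (c : ℝ) (hc : 0 < c)
    (hexp : ∀ x y : X, x ≠ y → c < ⨆ g : G, dist (φ g x) (φ g y))
    (l : ℕ) (hl : 0 < l)
    (hlsep : ∀ x y : X, c / 2 ≤ dist x y →
      ∃ g : G, wordLength S g ≤ l ∧ c ≤ dist (φ g x) (φ g y))
    (α : ℝ) (hα : 1 < α) (hαl : α ^ l < 2) (x y z : X) :
    rho S φ c α x z ≤ 2 * max (rho S φ c α x y) (rho S φ c α y z) := by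
  have hα0 : (0:ℝ) < α := lt_trans one_pos hα
  have hrho_nn : ∀ a b : X, 0 ≤ rho S φ c α a b := rho_nonneg S φ c α hα0
  -- key: if nIdx a b ≤ m then α^(-m) ≤ rho a b
  have key : ∀ (a b : X) (m : ℕ), nIdx S φ c a b ≤ (m : ℕ∞) →
      α ^ (-(m:ℤ)) ≤ rho S φ c α a b := by
    intro a b m hle
    have hne : nIdx S φ c a b ≠ ⊤ := fun h => by simp [h] at hle
    rw [rho, if_neg hne]
    have hk : (nIdx S φ c a b).toNat ≤ m := by
      have := ENat.toNat_le_toNat hle (by simp)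
      simpa using this
    exact zpow_le_zpow_right₀ hα.le (by omega)
  by_cases hxz : nIdx S φ c x z = ⊤
  · rw [rho, if_pos hxz]
    have : (0:ℝ) ≤ max (rho S φ c α x y) (rho S φ c α y z) :=
      le_max_of_le_left (hrho_nn x y)
    linarith
  · -- nIdx x z is finite; extract witness n and g
    set P : Set ℕ := {n : ℕ | ∃ g : G, wordLength S g ≤ n ∧ c ≤ dist (φ g x) (φ g z)} with hP
    have hPne : P.Nonempty := by
      by_contra h
      rw [Set.not_nonempty_iff_eq_empty] at h
      apply hxz
      rw [nIdx, show {n : ℕ | ∃ g : G, wordLength S g ≤ n ∧ c ≤ dist (φ g x) (φ g z)} = P from rfl,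
        h]
      simp
    set n := sInf P with hn
    have hnP : n ∈ P := Nat.sInf_mem hPne
    have hIdx_eq : nIdx S φ c x z = (n : ℕ∞) := by
      apply le_antisymm
      · exact sInf_le ⟨n, hnP, rfl⟩
      · apply le_sInf
        rintro b ⟨m, hm, rfl⟩
        exact_mod_cast Nat.sInf_le hm
    obtain ⟨g, hgl, hgd⟩ := hnP
    -- triangle: one of d(gx,gy), d(gy,gz) ≥ c/2
    have htri : c / 2 ≤ dist (φ g x) (φ g y) ∨ c / 2 ≤ dist (φ g y) (φ g z) := by
      by_contra h
      push_neg at h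
      have := dist_triangle (φ g x) (φ g y) (φ g z)
      linarith [h.1, h.2]
    -- in either case, get α^(-(n+l)) ≤ max rho
    have hmain : α ^ (-((n + l : ℕ) : ℤ)) ≤ max (rho S φ c α x y) (rho S φ c α y z) := by
      rcases htri with h | h
      · obtain ⟨h', hhl, hhd⟩ := hlsep _ _ h
        have happ : ∀ a : X, φ h' (φ g a) = φ (h' * g) a := by
          intro a; rw [map_mul]; rfl
        rw [happ, happ] at hhd
        have hmem : nIdx S φ c x y ≤ ((n + l : ℕ) : ℕ∞) := by
          apply sInf_le
          refine ⟨n + l, ⟨h' * g, ?_, hhd⟩, rfl⟩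
          calc wordLength S (h' * g) ≤ wordLength S h' + wordLength S g :=
                wordLength_mul_le hSsym hSgen _ _
            _ ≤ l + n := add_le_add hhl hgl
            _ = n + l := by omega
        exact le_max_of_le_left (key _ _ _ hmem)
      · obtain ⟨h', hhl, hhd⟩ := hlsep _ _ h
        have happ : ∀ a : X, φ h' (φ g a) = φ (h' * g) a := by
          intro a; rw [map_mul]; rfl
        rw [happ, happ] at hhd
        have hmem : nIdx S φ c y z ≤ ((n + l : ℕ) : ℕ∞) := by
          apply sInf_le
          refine ⟨n + l, ⟨h' * g, ?_, hhd⟩, rfl⟩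
          calc wordLength S (h' * g) ≤ wordLength S h' + wordLength S g :=
                wordLength_mul_le hSsym hSgen _ _
            _ ≤ l + n := add_le_add hhl hgl
            _ = n + l := by omega
        exact le_max_of_le_right (key _ _ _ hmem)
    -- rho x z = α^(-n) = α^l * α^(-(n+l)) ≤ 2 * α^(-(n+l))
    have hrxz : rho S φ c α x z = α ^ (-(n:ℤ)) := by
      rw [rho, if_neg hxz, hIdx_eq]; simp
    have heq : α ^ (-(n:ℤ)) = α ^ (l:ℤ) * α ^ (-((n + l : ℕ) : ℤ)) := by
      rw [← zpow_add₀ (ne_of_gt hα0)]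
      congr 1
      push_cast
      ring
    have hpos : (0:ℝ) < α ^ (-((n + l : ℕ) : ℤ)) := zpow_pos hα0 _
    have hαl' : α ^ (l:ℤ) < 2 := by rwa [zpow_natCast]
    calc rho S φ c α x z = α ^ (l:ℤ) * α ^ (-((n + l : ℕ) : ℤ)) := by rw [hrxz, heq]
      _ ≤ 2 * α ^ (-((n + l : ℕ) : ℤ)) := by nlinarith
      _ ≤ 2 * max (rho S φ c α x y) (rho S φ c α y z) := by nlinarith
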